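/- arXiv:2512.21779 — 4 statements merged into one kernel-verified Lean document; each statement's English description precedes it below -/
import Mathlib

section
/- Let $w_1,\dots,w_n \in \R$ satisfy $\sum_{i=1}^n w_i = 0$ and $\sum_{i=1}^n w_i^2 = 1$. Fix $\eps \in (0,1]$ and $K \ge \sqrt{2/\eps}$, and let $S = \{i \in [n] : |w_i| \le K/\sqrt{n}\}$. If $\sum_{i \in S} w_i^2 \ge \eps$, then $\sum_{\substack{i<j,\ i,j \in S}} (w_i - w_j)^2 \ge \eps n / 2$. -/
open Finset

theorem mass_separation_first_step
    (n : ℕ) (w : Fin n → ℝ)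
    (hsum : ∑ i, w i = 0) (hnorm : ∑ i, w i ^ 2 = 1)
    (ε K : ℝ) (hε0 : 0 < ε) (hε1 : ε ≤ 1) (hK : Real.sqrt (2 / ε) ≤ K)
    (S : Finset (Fin n)) (hS : ∀ i, i ∈ S ↔ |w i| ≤ K / Real.sqrt n)
    (hmass : ε ≤ ∑ i ∈ S, w i ^ 2) :
    ε * n / 2 ≤ ∑ p ∈ (S ×ˢ S).filter (fun p => p.1 < p.2), (w p.1 - w p.2) ^ 2 := by
  have hn : 0 < n := by
    rcases Nat.eq_zero_or_pos n with h | h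
    · subst h; simp at hnorm
    · exact h
  set A := ∑ i ∈ S, w i with hA
  set B := ∑ i ∈ S, w i ^ 2 with hB
  -- full product-sum identity
  have hfull : ∑ p ∈ S ×ˢ S, (w p.1 - w p.2) ^ 2 = 2 * ((S.card : ℝ) * B - A ^ 2) := by
    rw [Finset.sum_product]
    have : ∀ i ∈ S, ∑ j ∈ S, (w i - w j) ^ 2
        = (S.card : ℝ) * w i ^ 2 - 2 * w i * A + B := by
      intro i _
      have : ∀ j ∈ S, (w i - w j) ^ 2 = w i ^ 2 - 2 * w i * w j + w j ^ 2 := by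
        intro j _; ring
      rw [Finset.sum_congr rfl this, Finset.sum_add_distrib, Finset.sum_sub_distrib,
        Finset.sum_const, ← Finset.mul_sum, nsmul_eq_mul, hA, hB]
    have h2A : ∑ x ∈ S, 2 * w x * A = 2 * A ^ 2 := by
      rw [← Finset.sum_mul, ← Finset.mul_sum, ← hA]; ring
    rw [Finset.sum_congr rfl this, Finset.sum_add_distrib, Finset.sum_sub_distrib, h2A,
      Finset.sum_const, nsmul_eq_mul, ← Finset.mul_sum, ← hB]
    ring
  -- the filtered sum is half of the full sum
  have hhalf : ∑ p ∈ S ×ˢ S, (w p.1 - w p.2) ^ 2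
      = 2 * ∑ p ∈ (S ×ˢ S).filter (fun p => p.1 < p.2), (w p.1 - w p.2) ^ 2 := by
    rw [← Finset.sum_filter_add_sum_filter_not (S ×ˢ S) (fun p => p.1 < p.2)]
    have h1 : ∑ p ∈ (S ×ˢ S).filter (fun p => ¬ p.1 < p.2), (w p.1 - w p.2) ^ 2
        = ∑ p ∈ (S ×ˢ S).filter (fun p => p.2 < p.1), (w p.1 - w p.2) ^ 2 := by
      rw [← Finset.sum_filter_add_sum_filter_not
        ((S ×ˢ S).filter (fun p => ¬ p.1 < p.2)) (fun p => p.2 < p.1)]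
      have hz : ∑ p ∈ (((S ×ˢ S).filter (fun p => ¬ p.1 < p.2)).filter
          (fun p => ¬ p.2 < p.1)), (w p.1 - w p.2) ^ 2 = 0 := by
        apply Finset.sum_eq_zero
        intro p hp
        simp only [Finset.mem_filter] at hp
        have : p.1 = p.2 := le_antisymm (not_lt.1 hp.2) (not_lt.1 hp.1.2)
        rw [this]; ring
      rw [hz, add_zero, Finset.filter_filter]
      congr 1
      apply Finset.filter_congr
      intro p _
      constructor
      · exact fun h => h.2
      · exact fun h => ⟨not_lt.2 h.le, h⟩
    have h2 : ∑ p ∈ (S ×ˢ S).filter (fun p => p.2 < p.1), (w p.1 - w p.2) ^ 2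
        = ∑ p ∈ (S ×ˢ S).filter (fun p => p.1 < p.2), (w p.1 - w p.2) ^ 2 := by
      apply Finset.sum_nbij' (fun p => Prod.swap p) (fun p => Prod.swap p) <;>
        simp +contextual [Finset.mem_filter, and_comm, sub_sq, mul_comm] <;>
        intros <;> ring
    rw [h1, h2]; ring
  -- bounds
  have hK0 : 0 ≤ K := le_trans (Real.sqrt_nonneg _) hK
  have hK2 : 2 / ε ≤ K ^ 2 := by
    have := Real.sq_sqrt (by positivity : (0:ℝ) ≤ 2 / ε)
    nlinarith [sq_nonneg (K - Real.sqrt (2/ε)), Real.sqrt_nonneg (2/ε)]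
  have hsplitsum : A + ∑ i ∈ Sᶜ, w i = 0 := by
    rw [hA, Finset.sum_add_sum_compl]; exact hsum
  have hsplitsq : B + ∑ i ∈ Sᶜ, w i ^ 2 = 1 := by
    rw [hB, Finset.sum_add_sum_compl]; exact hnorm
  set m := ∑ i ∈ Sᶜ, w i ^ 2 with hm
  have hm0 : 0 ≤ m := Finset.sum_nonneg fun i _ => sq_nonneg _
  have hm1 : m ≤ 1 - ε := by linarith
  -- card of complement bound
  have hn' : (0:ℝ) < n := by exact_mod_cast hn
  have hcardc : (Sᶜ.card : ℝ) * K ^ 2 ≤ n * m := by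
    have hpt : ∀ i ∈ Sᶜ, K ^ 2 / n ≤ w i ^ 2 := by
      intro i hi
      have hlt : K / Real.sqrt n < |w i| := by
        have := (hS i).not.1 (Finset.mem_compl.1 hi)
        exact lt_of_not_ge this
      have h0 : 0 ≤ K / Real.sqrt n := by positivity
      have hsq : (K / Real.sqrt n) ^ 2 ≤ |w i| ^ 2 :=
        pow_le_pow_left₀ h0 hlt.le 2
      calc K ^ 2 / n = (K / Real.sqrt n) ^ 2 := by
            rw [div_pow, Real.sq_sqrt hn'.le]
        _ ≤ |w i| ^ 2 := hsq
        _ = w i ^ 2 := sq_abs _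
    have h2 := Finset.card_nsmul_le_sum Sᶜ (fun i => w i ^ 2) (K ^ 2 / n) hpt
    rw [nsmul_eq_mul] at h2
    have h3 := mul_le_mul_of_nonneg_right h2 hn'.le
    rw [mul_assoc, div_mul_cancel₀ _ hn'.ne'] at h3
    rw [hm]
    calc (Sᶜ.card : ℝ) * K ^ 2 ≤ (∑ i ∈ Sᶜ, w i ^ 2) * n := h3
      _ = n * ∑ i ∈ Sᶜ, w i ^ 2 := mul_comm _ _
  have hA2 : A ^ 2 ≤ (Sᶜ.card : ℝ) * m := by
    have h := sq_sum_le_card_mul_sum_sq (s := Sᶜ) (f := w)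
    have hAeq : A = -∑ i ∈ Sᶜ, w i := by linarith
    rw [hAeq, neg_pow, ← hm] at *
    simpa using h
  have hK2' : 2 ≤ ε * K ^ 2 := by
    rw [div_le_iff₀ hε0] at hK2; linarith
  set c := (Sᶜ.card : ℝ) with hc
  have hc0 : 0 ≤ c := Nat.cast_nonneg _
  have hc2 : 2 * c ≤ ε * (n * m) := by
    nlinarith [mul_le_mul_of_nonneg_left hcardc hε0.le, mul_le_mul_of_nonneg_left hK2' hc0]
  have hcard : (S.card : ℝ) = n - c := by
    have h := Finset.card_add_card_compl S
    rw [Fintype.card_fin] at h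
    have h2 : (S.card : ℝ) + (Sᶜ.card : ℝ) = n := by exact_mod_cast h
    rw [hc]; linarith
  have hgoal : ε * n / 2 ≤ (n - c) * B - A ^ 2 := by
    nlinarith [hA2, hc2, hsplitsq,
      mul_nonneg hn'.le (by linarith : (0:ℝ) ≤ 1 - ε - m),
      mul_nonneg (mul_nonneg hε0.le hn'.le) (by linarith : (0:ℝ) ≤ 1 - ε - m),
      mul_nonneg (mul_nonneg hn'.le hε0.le) hε0.le]
  have := hhalf; rw [hfull, hcard] at this
  linarith
end

section
/- Let $w_1,\dots,w_n \in \R$ satisfy $\sum_{i=1}^n w_i = 0$ and $\sum_{i=1}^n w_i^2 = 1$. Fix $\eps \in (0,1]$ and $K \ge \sqrt{2/\eps}$. Assume $\sum_{i : |w_i| \le K/\sqrt{n}} w_i^2 \ge \eps$. Then there exist disjoint subsets $I, J \subset [n]$ with $|I| = |J| \ge \lfloor (\eps/32K^2)n \rfloor$ such that $\sqrt{\eps/(2n)} \le |w_i - w_j| \le 2K/\sqrt{n}$ for all $i \in I$, $j \in J$. -/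
set_option maxHeartbeats 1000000
open Finset

lemma exists_top {ι : Type*} [DecidableEq ι] (w : ι → ℝ) (S : Finset ι) :
    ∀ p : ℕ, p ≤ S.card →
    ∃ T, T ⊆ S ∧ T.card = p ∧ ∀ i ∈ T, ∀ j ∈ S \ T, w j ≤ w i := by
  intro p
  induction p with
  | zero => exact fun _ => ⟨∅, empty_subset _, rfl, by simp⟩
  | succ p ih =>
    intro hp
    obtain ⟨T, hTS, hTc, hT⟩ := ih (Nat.le_of_succ_le hp)
    have hne : (S \ T).Nonempty := by
      rw [← Finset.card_pos, Finset.card_sdiff_of_subset hTS, hTc]; omega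
    obtain ⟨i₀, hi₀, hmax⟩ := Finset.exists_max_image (S \ T) w hne
    have hi₀T : i₀ ∉ T := (Finset.mem_sdiff.mp hi₀).2
    refine ⟨insert i₀ T, Finset.insert_subset (Finset.mem_sdiff.mp hi₀).1 hTS,
      by rw [Finset.card_insert_of_notMem hi₀T, hTc], ?_⟩
    intro i hi j hj
    have hj' : j ∈ S \ T := by
      rw [Finset.mem_sdiff] at hj ⊢
      exact ⟨hj.1, fun h => hj.2 (Finset.mem_insert_of_mem h)⟩
    rcases Finset.mem_insert.mp hi with rfl | hi
    · exact hmax j hj'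
    · exact hT i hi j hj'

theorem mass_separation
    (n : ℕ) (w : Fin n → ℝ)
    (hsum : ∑ i, w i = 0) (hnorm : ∑ i, w i ^ 2 = 1)
    (ε K : ℝ) (hε0 : 0 < ε) (hε1 : ε ≤ 1) (hK : Real.sqrt (2 / ε) ≤ K)
    (hmass : ε ≤ ∑ i ∈ Finset.univ.filter (fun i => |w i| ≤ K / Real.sqrt n), w i ^ 2) :
    ∃ I J : Finset (Fin n), Disjoint I J ∧ I.card = J.card ∧
      ⌊(ε / (32 * K ^ 2)) * n⌋₊ ≤ J.card ∧
      ∀ i ∈ I, ∀ j ∈ J,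
        Real.sqrt (ε / (2 * n)) ≤ |w i - w j| ∧ |w i - w j| ≤ 2 * K / Real.sqrt n := by
  set p := ⌊(ε / (32 * K ^ 2)) * n⌋₊ with hp
  by_cases hp0 : p = 0
  · exact ⟨∅, ∅, by simp, rfl, by simp [← hp, hp0], by simp⟩
  -- positivity facts
  have hKsq : 2 / ε ≤ K ^ 2 := by
    have h := pow_le_pow_left₀ (Real.sqrt_nonneg (2 / ε)) hK 2
    rwa [Real.sq_sqrt (by positivity)] at h
  have hK0 : 0 < K := lt_of_lt_of_le (Real.sqrt_pos.mpr (by positivity)) hK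
  have h2εK : 2 ≤ ε * K ^ 2 := by
    rw [div_le_iff₀ hε0] at hKsq; linarith [hKsq]
  have hn : 0 < n := by
    rcases Nat.eq_zero_or_pos n with h | h
    · exfalso; apply hp0; simp [hp, h]
    · exact h
  have hn0 : (0:ℝ) < n := by exact_mod_cast hn
  have hsqn : (0:ℝ) < Real.sqrt n := Real.sqrt_pos.mpr hn0
  -- the set S and its complement
  set S : Finset (Fin n) := Finset.univ.filter (fun i => |w i| ≤ K / Real.sqrt n) with hS
  set Sc : Finset (Fin n) := Finset.univ.filter (fun i => ¬ |w i| ≤ K / Real.sqrt n) with hSc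
  have hbS : ∀ i ∈ S, |w i| ≤ K / Real.sqrt n := fun i hi => (Finset.mem_filter.mp hi).2
  set σ : ℝ := ∑ i ∈ S, w i ^ 2 with hσ
  set σ' : ℝ := ∑ i ∈ Sc, w i ^ 2 with hσ'
  set s : ℝ := ∑ i ∈ S, w i with hsdef
  have hsplit2 : σ + σ' = 1 := by
    rw [hσ, hσ', hS, hSc, Finset.sum_filter_add_sum_filter_not, hnorm]
  have hsplit1 : s + ∑ i ∈ Sc, w i = 0 := by
    rw [hsdef, hS, hSc, Finset.sum_filter_add_sum_filter_not, hsum]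
  have hσ'0 : 0 ≤ σ' := Finset.sum_nonneg fun i _ => sq_nonneg _
  have hσ0 : 0 ≤ σ := Finset.sum_nonneg fun i _ => sq_nonneg _
  -- complement cardinality bound
  have hcK : (Sc.card : ℝ) * (K ^ 2 / n) ≤ σ' := by
    rw [hσ']
    have : ∀ i ∈ Sc, K ^ 2 / n ≤ w i ^ 2 := by
      intro i hi
      have h1 : K / Real.sqrt n < |w i| := lt_of_not_ge (Finset.mem_filter.mp hi).2
      have h2 : (K / Real.sqrt n) ^ 2 ≤ |w i| ^ 2 :=
        pow_le_pow_left₀ (by positivity) h1.le 2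
      rwa [div_pow, Real.sq_sqrt hn0.le, sq_abs] at h2
    calc (Sc.card : ℝ) * (K ^ 2 / n) = Sc.card • (K ^ 2 / n) := by rw [nsmul_eq_mul]
    _ ≤ ∑ i ∈ Sc, w i ^ 2 := Finset.card_nsmul_le_sum Sc _ _ this
  have hcs : s ^ 2 ≤ (Sc.card : ℝ) * σ' := by
    have h1 : s = -∑ i ∈ Sc, w i := by linarith
    have h2 := sq_sum_le_card_mul_sum_sq (s := Sc) (f := w)
    rw [h1, neg_pow]
    simpa using h2
  have hmc : (S.card : ℝ) + Sc.card = n := by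
    have h := Finset.card_filter_add_card_filter_not
      (s := (Finset.univ : Finset (Fin n))) (p := fun i => |w i| ≤ K / Real.sqrt n)
    rw [Finset.card_univ, Fintype.card_fin] at h
    rw [hS, hSc]
    exact_mod_cast h
  -- 2c ≤ n σ' ε and hence c ≤ n/2
  have h2c : 2 * (Sc.card : ℝ) ≤ n * σ' * ε := by
    have h1 : (Sc.card : ℝ) * K ^ 2 ≤ n * σ' := by
      have h := mul_le_mul_of_nonneg_right hcK hn0.le
      calc (Sc.card : ℝ) * K ^ 2 = (Sc.card : ℝ) * (K ^ 2 / n) * n := by field_simp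
      _ ≤ σ' * n := h
      _ = n * σ' := mul_comm _ _
    have h2 := mul_le_mul_of_nonneg_right h2εK (Nat.cast_nonneg Sc.card : (0:ℝ) ≤ Sc.card)
    have h3 := mul_le_mul_of_nonneg_left h1 hε0.le
    calc 2 * (Sc.card : ℝ) = 2 * (Sc.card : ℝ) := rfl
    _ ≤ ε * K ^ 2 * Sc.card := by linarith
    _ = ε * ((Sc.card : ℝ) * K ^ 2) := by ring
    _ ≤ ε * (n * σ') := h3
    _ = n * σ' * ε := by ring
  have hσ'le1 : σ' ≤ 1 := by linarith
  have hcle : (Sc.card : ℝ) ≤ n / 2 := by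
    have ha := mul_le_mul_of_nonneg_left hε1 (mul_nonneg hn0.le hσ'0)
    have hb := mul_le_mul_of_nonneg_left hσ'le1 hn0.le
    have hc : (n:ℝ) * σ' * ε ≤ n * σ' * 1 := ha
    linarith
  -- Q identity
  set Q : ℝ := ∑ i ∈ S, ∑ j ∈ S, (w i - w j) ^ 2 with hQdef
  have hQ : Q = 2 * S.card * σ - 2 * s ^ 2 := by
    have hrow : ∀ i ∈ S, ∑ j ∈ S, (w i - w j) ^ 2
        = (S.card : ℝ) * w i ^ 2 - (2 * s) * w i + σ := by
      intro i _
      calc ∑ j ∈ S, (w i - w j) ^ 2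
          = ∑ j ∈ S, (w i ^ 2 - (2 * w i) * w j + w j ^ 2) :=
            Finset.sum_congr rfl fun j _ => by ring
      _ = (∑ j ∈ S, (w i ^ 2 - (2 * w i) * w j)) + σ := by
            rw [Finset.sum_add_distrib, ← hσ]
      _ = (∑ j ∈ S, (w i ^ 2 : ℝ)) - (2 * w i) * s + σ := by
            rw [Finset.sum_sub_distrib, ← Finset.mul_sum, ← hsdef]
      _ = (S.card : ℝ) * w i ^ 2 - (2 * s) * w i + σ := by
            rw [Finset.sum_const, nsmul_eq_mul]; ring
    calc Q = ∑ i ∈ S, ((S.card : ℝ) * w i ^ 2 - (2 * s) * w i + σ) :=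
          Finset.sum_congr rfl hrow
    _ = (∑ i ∈ S, (((S.card : ℝ)) * w i ^ 2 - (2 * s) * w i)) + (S.card : ℝ) * σ := by
          rw [Finset.sum_add_distrib, Finset.sum_const, nsmul_eq_mul]
    _ = (S.card : ℝ) * (∑ i ∈ S, w i ^ 2) - (2 * s) * (∑ i ∈ S, w i)
          + (S.card : ℝ) * σ := by
          rw [Finset.sum_sub_distrib, ← Finset.mul_sum, ← Finset.mul_sum]
    _ = 2 * S.card * σ - 2 * s ^ 2 := by rw [← hσ, ← hsdef]; ring
  -- lower bound on Q
  have hQlb : n * ε ≤ Q := by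
    rw [hQ]
    have e0 : (Sc.card:ℝ) * σ + (Sc.card:ℝ) * σ' = Sc.card := by
      rw [← mul_add, hsplit2, mul_one]
    have e1 : 2 * (n:ℝ) * ε ≤ 2 * n * σ := by
      have := mul_le_mul_of_nonneg_left hmass (by positivity : (0:ℝ) ≤ 2 * n)
      linarith
    have e2 : (n:ℝ) * σ' * ε ≤ n * ε := by
      have h := mul_le_mul_of_nonneg_left hσ'le1 (by positivity : (0:ℝ) ≤ n * ε)
      nlinarith [h]
    have em : (S.card:ℝ) = n - Sc.card := by linarith
    have e3 : 2 * (S.card:ℝ) * σ = 2 * n * σ - 2 * (Sc.card:ℝ) * σ := by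
      rw [em]; ring
    linarith
  -- p is small compared to card S
  have hple : (p : ℝ) ≤ ε / (32 * K ^ 2) * n := Nat.floor_le (by positivity)
  have hp64 : (p : ℝ) ≤ n / 64 := by
    have h1 : ε / (32 * K ^ 2) ≤ 1 / 64 := by
      rw [div_le_div_iff₀ (by positivity) (by norm_num)]
      nlinarith [h2εK, mul_nonneg (sub_nonneg.mpr hε1) (sq_nonneg K)]
    calc (p:ℝ) ≤ ε / (32 * K ^ 2) * n := hple
    _ ≤ 1 / 64 * n := mul_le_mul_of_nonneg_right h1 hn0.le
    _ = n / 64 := by ring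
  have hmn : (S.card : ℝ) ≤ n := by linarith [(Nat.cast_nonneg Sc.card : (0:ℝ) ≤ Sc.card)]
  have h2pm : 2 * p ≤ S.card := by
    have : (2 * p : ℝ) ≤ (S.card : ℝ) := by push_cast; linarith
    exact_mod_cast this
  -- select I and J
  obtain ⟨I, hIS, hIc, hI⟩ := exists_top w S p (by omega)
  obtain ⟨J, hJS, hJc, hJ⟩ := exists_top (fun i => -w i) (S \ I) p (by
    rw [Finset.card_sdiff_of_subset hIS, hIc]; omega)
  have hdisj : Disjoint I J := Finset.disjoint_right.mpr
    (fun j hj => (Finset.mem_sdiff.mp (hJS hj)).2)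
  have hIne : I.Nonempty := Finset.card_pos.mp (by rw [hIc]; omega)
  have hJne : J.Nonempty := Finset.card_pos.mp (by rw [hJc]; omega)
  obtain ⟨i₀, hi₀I, hi₀min⟩ := Finset.exists_min_image I w hIne
  obtain ⟨j₀, hj₀J, hj₀max⟩ := Finset.exists_max_image J w hJne
  have hJsub : J ⊆ S := fun j hj => (Finset.mem_sdiff.mp (hJS hj)).1
  have hab0 : 0 ≤ w i₀ - w j₀ := by
    have := hI i₀ hi₀I j₀ (hJS hj₀J)
    linarith
  -- key gap claim
  have hkey : Real.sqrt (ε / (2 * n)) ≤ w i₀ - w j₀ := by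
    by_contra hlt
    push_neg at hlt
    set M : Finset (Fin n) := (S \ I) \ J with hM
    have hMSI : M ⊆ S \ I := Finset.sdiff_subset
    have hMS : M ⊆ S := hMSI.trans Finset.sdiff_subset
    have hMb : ∀ x ∈ M, w j₀ ≤ w x ∧ w x ≤ w i₀ := by
      intro x hx
      constructor
      · have := hJ j₀ hj₀J x hx
        simpa using this
      · exact hI i₀ hi₀I x (hMSI hx)
    have hMcard : M.card = S.card - 2 * p := by
      rw [hM, Finset.card_sdiff_of_subset hJS, Finset.card_sdiff_of_subset hIS, hIc, hJc]; omega
    have hSMcard : (S \ M).card = 2 * p := by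
      rw [Finset.card_sdiff_of_subset hMS, hMcard]; omega
    have hδsq : Real.sqrt (ε / (2 * n)) ^ 2 = ε / (2 * n) :=
      Real.sq_sqrt (by positivity)
    -- term bounds
    have hbig : ∀ i ∈ S, ∀ j ∈ S, (w i - w j) ^ 2 ≤ 4 * K ^ 2 / n := by
      intro i hi j hj
      have h1 : |w i - w j| ≤ 2 * K / Real.sqrt n := by
        calc |w i - w j| ≤ |w i| + |w j| := abs_sub _ _
        _ ≤ K / Real.sqrt n + K / Real.sqrt n := add_le_add (hbS i hi) (hbS j hj)
        _ = 2 * K / Real.sqrt n := by ring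
      have h2 : (w i - w j) ^ 2 ≤ (2 * K / Real.sqrt n) ^ 2 := by
        rw [← sq_abs]
        exact pow_le_pow_left₀ (abs_nonneg _) h1 2
      calc (w i - w j) ^ 2 ≤ (2 * K / Real.sqrt n) ^ 2 := h2
      _ = 4 * K ^ 2 / n := by rw [div_pow, Real.sq_sqrt hn0.le]; ring
    have hmid : ∀ i ∈ M, ∀ j ∈ M, (w i - w j) ^ 2 ≤ (w i₀ - w j₀) ^ 2 := by
      intro i hi j hj
      obtain ⟨h1, h2⟩ := hMb i hi
      obtain ⟨h3, h4⟩ := hMb j hj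
      have : |w i - w j| ≤ w i₀ - w j₀ := abs_sub_le_iff.mpr ⟨by linarith, by linarith⟩
      rw [← sq_abs]
      exact pow_le_pow_left₀ (abs_nonneg _) this 2
    -- decompose Q
    have hQsplit : Q = (∑ i ∈ S \ M, ∑ j ∈ S, (w i - w j) ^ 2)
        + ((∑ i ∈ M, ∑ j ∈ S \ M, (w i - w j) ^ 2)
          + ∑ i ∈ M, ∑ j ∈ M, (w i - w j) ^ 2) := by
      rw [hQdef, ← Finset.sum_sdiff hMS]
      congr 1
      rw [← Finset.sum_add_distrib]
      exact Finset.sum_congr rfl fun i _ => (Finset.sum_sdiff hMS).symm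
    have hA : ∑ i ∈ S \ M, ∑ j ∈ S, (w i - w j) ^ 2
        ≤ (2 * p : ℝ) * (S.card * (4 * K ^ 2 / n)) := by
      calc ∑ i ∈ S \ M, ∑ j ∈ S, (w i - w j) ^ 2
          ≤ ∑ i ∈ S \ M, (S.card : ℝ) * (4 * K ^ 2 / n) := by
            apply Finset.sum_le_sum
            intro i hi
            have := Finset.sum_le_card_nsmul S _ (4 * K ^ 2 / n)
              (fun j hj => hbig i (Finset.mem_sdiff.mp hi).1 j hj)
            rwa [nsmul_eq_mul] at this
      _ = (2 * p : ℝ) * (S.card * (4 * K ^ 2 / n)) := by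
          rw [Finset.sum_const, nsmul_eq_mul, hSMcard]; push_cast; ring
    have hB : ∑ i ∈ M, ∑ j ∈ S \ M, (w i - w j) ^ 2
        ≤ (M.card : ℝ) * ((2 * p : ℝ) * (4 * K ^ 2 / n)) := by
      calc ∑ i ∈ M, ∑ j ∈ S \ M, (w i - w j) ^ 2
          ≤ ∑ i ∈ M, ((2 * p : ℝ) * (4 * K ^ 2 / n)) := by
            apply Finset.sum_le_sum
            intro i hi
            have := Finset.sum_le_card_nsmul (S \ M) _ (4 * K ^ 2 / n)
              (fun j hj => hbig i (hMS hi) j (Finset.mem_sdiff.mp hj).1)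
            rw [nsmul_eq_mul, hSMcard] at this
            push_cast at this ⊢
            linarith
      _ = (M.card : ℝ) * ((2 * p : ℝ) * (4 * K ^ 2 / n)) := by
          rw [Finset.sum_const, nsmul_eq_mul]
    have hC : ∑ i ∈ M, ∑ j ∈ M, (w i - w j) ^ 2
        ≤ (M.card : ℝ) ^ 2 * (w i₀ - w j₀) ^ 2 := by
      calc ∑ i ∈ M, ∑ j ∈ M, (w i - w j) ^ 2
          ≤ ∑ i ∈ M, (M.card : ℝ) * (w i₀ - w j₀) ^ 2 := by
            apply Finset.sum_le_sum
            intro i hi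
            have := Finset.sum_le_card_nsmul M _ ((w i₀ - w j₀) ^ 2)
              (fun j hj => hmid i hi j hj)
            rwa [nsmul_eq_mul] at this
      _ = (M.card : ℝ) ^ 2 * (w i₀ - w j₀) ^ 2 := by
          rw [Finset.sum_const, nsmul_eq_mul]; ring
    have hMn : (M.card : ℝ) ≤ n := by
      have := Finset.card_le_card hMS
      have h2 : (M.card : ℝ) ≤ (S.card : ℝ) := by exact_mod_cast this
      linarith
    have hMc0 : (0:ℝ) ≤ (M.card : ℝ) := Nat.cast_nonneg _
    have habδ : (w i₀ - w j₀) ^ 2 < ε / (2 * n) := by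
      rw [← hδsq]
      exact pow_lt_pow_left₀ hlt hab0 (by norm_num)
    have hCfin : (M.card : ℝ) ^ 2 * (w i₀ - w j₀) ^ 2 < n * ε / 2 := by
      have h1 : (M.card : ℝ) ^ 2 * (w i₀ - w j₀) ^ 2 ≤ (n:ℝ)^2 * (w i₀ - w j₀) ^ 2 := by
        apply mul_le_mul_of_nonneg_right _ (sq_nonneg _)
        exact pow_le_pow_left₀ hMc0 hMn 2
      have h2 : (n:ℝ)^2 * (w i₀ - w j₀) ^ 2 < (n:ℝ)^2 * (ε / (2 * n)) :=
        mul_lt_mul_of_pos_left habδ (by positivity)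
      have h3 : (n:ℝ)^2 * (ε / (2 * n)) = n * ε / 2 := by field_simp
      linarith
    have h16 : 16 * (p:ℝ) * K ^ 2 ≤ n * ε / 2 := by
      have := mul_le_mul_of_nonneg_right hple (by positivity : (0:ℝ) ≤ 32 * K ^ 2)
      calc 16 * (p:ℝ) * K ^ 2 = (p:ℝ) * (32 * K ^ 2) / 2 := by ring
      _ ≤ ε / (32 * K ^ 2) * n * (32 * K ^ 2) / 2 := by linarith
      _ = n * ε / 2 := by field_simp
    have hAfin : (2 * p : ℝ) * (S.card * (4 * K ^ 2 / n)) ≤ 8 * (p:ℝ) * K ^ 2 := by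
      have h1 : (S.card : ℝ) * (4 * K ^ 2 / n) ≤ 4 * K ^ 2 := by
        rw [mul_div_assoc', div_le_iff₀ hn0]
        have := mul_le_mul_of_nonneg_right hmn (by positivity : (0:ℝ) ≤ 4 * K ^ 2)
        linarith
      have h2 := mul_le_mul_of_nonneg_left h1 (by positivity : (0:ℝ) ≤ 2 * (p:ℝ))
      linarith
    have hBfin : (M.card : ℝ) * ((2 * p : ℝ) * (4 * K ^ 2 / n)) ≤ 8 * (p:ℝ) * K ^ 2 := by
      have h1 : (0:ℝ) ≤ (2 * p : ℝ) * (4 * K ^ 2 / n) := by positivity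
      calc (M.card : ℝ) * ((2 * p : ℝ) * (4 * K ^ 2 / n))
          ≤ (n:ℝ) * ((2 * p : ℝ) * (4 * K ^ 2 / n)) := mul_le_mul_of_nonneg_right hMn h1
      _ = 8 * (p:ℝ) * K ^ 2 := by field_simp; ring
    rw [hQsplit] at hQlb
    linarith
  -- conclusion
  refine ⟨I, J, hdisj, by rw [hIc, hJc], by rw [hJc], ?_⟩
  intro i hi j hj
  have h1 : w i₀ ≤ w i := hi₀min i hi
  have h2 : w j ≤ w j₀ := hj₀max j hj
  have hlow : Real.sqrt (ε / (2 * n)) ≤ w i - w j := by linarith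
  have habs : |w i - w j| = w i - w j := abs_of_nonneg (by
    have := Real.sqrt_nonneg (ε / (2 * n)); linarith)
  constructor
  · rw [habs]; exact hlow
  · calc |w i - w j| ≤ |w i| + |w j| := abs_sub _ _
    _ ≤ K / Real.sqrt n + K / Real.sqrt n :=
        add_le_add (hbS i (hIS hi)) (hbS j (hJsub hj))
    _ = 2 * K / Real.sqrt n := by ring
end

section
/- Let $w_1,\dots,w_n \in \R$ with mean $\overline{w} = \frac{1}{n}\sum_i w_i$ and $\sigma^2 = \sum_i (w_i - \overline{w})^2$. Suppose $\frac{1}{n}\sum_{i=1}^n \big(n(w_i - \overline{w})^2/\sigma^2\big)^2 \le K$ for some $K > 1$. Then $\sum_{i : |w_i - \overline{w}|/\sigma \le K/\sqrt{n}} (w_i - \overline{w})^2 \ge (1 - 1/K)\sigma^2$. -/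
open Finset

theorem variance_mass_near_mean
    (n : ℕ) (w : Fin n → ℝ) (K : ℝ) (hK : 1 < K)
    (wbar σ : ℝ)
    (hwbar : wbar = (1 / (n : ℝ)) * ∑ i, w i)
    (hσ : σ ^ 2 = ∑ i, (w i - wbar) ^ 2)
    (hmom : (1 / (n : ℝ)) * ∑ i, ((n : ℝ) * (w i - wbar) ^ 2 / σ ^ 2) ^ 2 ≤ K) :
    (1 - 1 / K) * σ ^ 2 ≤
      ∑ i ∈ Finset.univ.filter (fun i => |w i - wbar| / σ ≤ K / Real.sqrt n),
        (w i - wbar) ^ 2 := by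
  have hK0 : (0:ℝ) < K := lt_trans one_pos hK
  rcases lt_trichotomy σ 0 with hσneg | hσ0 | hσpos
  · -- σ < 0: every i satisfies the filter condition
    have hfull : (Finset.univ.filter (fun i => |w i - wbar| / σ ≤ K / Real.sqrt n)) = Finset.univ := by
      apply Finset.filter_true_of_mem
      intro i _
      have h1 : |w i - wbar| / σ ≤ 0 := div_nonpos_of_nonneg_of_nonpos (abs_nonneg _) hσneg.le
      have h2 : (0:ℝ) ≤ K / Real.sqrt n := div_nonneg hK0.le (Real.sqrt_nonneg _)
      linarith
    rw [hfull, ← hσ]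
    nlinarith [sq_nonneg σ, one_div_pos.mpr hK0]
  · -- σ = 0
    subst hσ0
    have h0 : (0:ℝ) ^ 2 = 0 := by norm_num
    rw [h0]
    have hnn : (0:ℝ) ≤ ∑ i ∈ Finset.univ.filter
        (fun i => |w i - wbar| / (0:ℝ) ≤ K / Real.sqrt n),
        (w i - wbar) ^ 2 := Finset.sum_nonneg fun i _ => sq_nonneg _
    linarith
  · -- main case σ > 0
    have hσ2pos : (0:ℝ) < σ ^ 2 := by positivity
    have hn0 : 0 < n := by
      rcases Nat.eq_zero_or_pos n with h | h
      · exfalso; subst h; simp at hσ; nlinarith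
      · exact h
    have hnpos : (0:ℝ) < (n:ℝ) := Nat.cast_pos.mpr hn0
    have hsqrt : (0:ℝ) < Real.sqrt n := Real.sqrt_pos.mpr hnpos
    set a : Fin n → ℝ := fun i => (w i - wbar) ^ 2 with ha
    have hmom' : ∑ i, ((n:ℝ) * a i / σ ^ 2) ^ 2 ≤ (n:ℝ) * K := by
      have := mul_le_mul_of_nonneg_left hmom hnpos.le
      calc ∑ i, ((n:ℝ) * a i / σ ^ 2) ^ 2
          = (n:ℝ) * ((1 / (n:ℝ)) * ∑ i, ((n:ℝ) * a i / σ ^ 2) ^ 2) := by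
            field_simp
        _ ≤ (n:ℝ) * K := this
    -- bad set bound
    have hbad : ∀ i, ¬ (|w i - wbar| / σ ≤ K / Real.sqrt n) →
        a i ≤ σ ^ 2 / ((n:ℝ) * K ^ 2) * ((n:ℝ) * a i / σ ^ 2) ^ 2 := by
      intro i hi
      push_neg at hi
      have h1 : K * σ < |w i - wbar| * Real.sqrt n := (div_lt_div_iff₀ hsqrt hσpos).mp hi
      have hxx : |w i - wbar| ^ 2 = a i := sq_abs _
      have hnn : Real.sqrt (n:ℝ) ^ 2 = (n:ℝ) := Real.sq_sqrt hnpos.le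
      have h2 : K ^ 2 * σ ^ 2 < (n:ℝ) * a i := by
        nlinarith [abs_nonneg (w i - wbar), mul_pos hK0 hσpos]
      have hai : 0 < a i := by nlinarith
      have hrw : σ ^ 2 / ((n:ℝ) * K ^ 2) * ((n:ℝ) * a i / σ ^ 2) ^ 2
          = (n:ℝ) * a i ^ 2 / (K ^ 2 * σ ^ 2) := by
        field_simp
      rw [hrw, le_div_iff₀ (by positivity)]
      nlinarith
    have hsplit := Finset.sum_filter_add_sum_filter_not Finset.univ
      (fun i => |w i - wbar| / σ ≤ K / Real.sqrt n) a
    have hbadsum : ∑ i ∈ Finset.univ.filter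
        (fun i => ¬ (|w i - wbar| / σ ≤ K / Real.sqrt n)), a i ≤ σ ^ 2 / K := by
      calc ∑ i ∈ Finset.univ.filter (fun i => ¬ (|w i - wbar| / σ ≤ K / Real.sqrt n)), a i
          ≤ ∑ i ∈ Finset.univ.filter (fun i => ¬ (|w i - wbar| / σ ≤ K / Real.sqrt n)),
              σ ^ 2 / ((n:ℝ) * K ^ 2) * ((n:ℝ) * a i / σ ^ 2) ^ 2 := by
            apply Finset.sum_le_sum
            intro i hi
            simp only [Finset.mem_filter, Finset.mem_univ, true_and] at hi
            exact hbad i hi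
        _ ≤ ∑ i, σ ^ 2 / ((n:ℝ) * K ^ 2) * ((n:ℝ) * a i / σ ^ 2) ^ 2 := by
            apply Finset.sum_le_sum_of_subset_of_nonneg (Finset.filter_subset _ _)
            intro i _ _
            positivity
        _ = σ ^ 2 / ((n:ℝ) * K ^ 2) * ∑ i, ((n:ℝ) * a i / σ ^ 2) ^ 2 := by
            rw [Finset.mul_sum]
        _ ≤ σ ^ 2 / ((n:ℝ) * K ^ 2) * ((n:ℝ) * K) := by
            apply mul_le_mul_of_nonneg_left hmom' (by positivity)
        _ = σ ^ 2 / K := by field_simp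
    have hgoal : (1 - 1 / K) * σ ^ 2 = σ ^ 2 - σ ^ 2 / K := by
      field_simp
    rw [hgoal]
    have hσsum : (∑ i ∈ Finset.univ.filter
        (fun i => |w i - wbar| / σ ≤ K / Real.sqrt n), a i)
        + (∑ i ∈ Finset.univ.filter
        (fun i => ¬ (|w i - wbar| / σ ≤ K / Real.sqrt n)), a i) = σ ^ 2 := by
      rw [hsplit, hσ]
    linarith
end

section
/- Let $(a_{ij})_{1\le i,j\le n}$ be a real $n \times n$ array, and let $S_\pi = \sum_{i=1}^n a_{i\pi(i)}$ where $\pi$ is a uniformly random permutation of $[n]$. Then $\mathrm{Var}(S_\pi) = \frac{1}{4n^2(n-1)} \sum_{i \ne j,\ k \ne l} (a_{ik} - a_{jk} - a_{il} + a_{jl})^2$. -/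
open Finset

section aux

lemma fiber_card_eq (n : ℕ) (i k k' : Fin n) :
    (univ.filter fun π : Equiv.Perm (Fin n) => π i = k).card =
    (univ.filter fun π : Equiv.Perm (Fin n) => π i = k').card := by
  apply Finset.card_bij' (fun π _ => Equiv.swap k k' * π) (fun π _ => Equiv.swap k k' * π)
  · intro π hπ
    simp only [mem_filter, mem_univ, true_and] at *
    simp [hπ]
  · intro π hπ
    simp only [mem_filter, mem_univ, true_and] at *
    simp [hπ, Equiv.swap_apply_right]
  · intro π _
    simp [← mul_assoc]
  · intro π _
    simp [← mul_assoc]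

lemma fiber_card (n : ℕ) (hn : 1 ≤ n) (i k : Fin n) :
    (univ.filter fun π : Equiv.Perm (Fin n) => π i = k).card = (n-1).factorial := by
  have h : (univ : Finset (Equiv.Perm (Fin n))).card =
      ∑ k' : Fin n, (univ.filter fun π : Equiv.Perm (Fin n) => π i = k').card :=
    Finset.card_eq_sum_card_fiberwise (fun π _ => mem_univ _)
  rw [Finset.card_univ, Fintype.card_perm, Fintype.card_fin,
    Finset.sum_congr rfl (fun k' _ => fiber_card_eq n i k' k), Finset.sum_const,
    Finset.card_univ, Fintype.card_fin, smul_eq_mul] at h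
  have h2 : n * (n-1).factorial = n.factorial := Nat.mul_factorial_pred (by omega)
  exact (Nat.eq_of_mul_eq_mul_left (by omega) (h2.trans h)).symm

lemma pair_fiber_card_eq (n : ℕ) (i j k : Fin n) (l l' : Fin n) (hl : l ≠ k) (hl' : l' ≠ k) :
    (univ.filter fun π : Equiv.Perm (Fin n) => π i = k ∧ π j = l).card =
    (univ.filter fun π : Equiv.Perm (Fin n) => π i = k ∧ π j = l').card := by
  apply Finset.card_bij' (fun π _ => Equiv.swap l l' * π) (fun π _ => Equiv.swap l l' * π)
  · intro π hπ
    simp only [mem_filter, mem_univ, true_and] at *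
    obtain ⟨h1, h2⟩ := hπ
    constructor
    · simp [h1, Equiv.swap_apply_of_ne_of_ne (Ne.symm hl) (Ne.symm hl')]
    · simp [h2]
  · intro π hπ
    simp only [mem_filter, mem_univ, true_and] at *
    obtain ⟨h1, h2⟩ := hπ
    constructor
    · simp [h1, Equiv.swap_apply_of_ne_of_ne (Ne.symm hl) (Ne.symm hl')]
    · simp [h2, Equiv.swap_apply_right]
  · intro π _
    simp [← mul_assoc]
  · intro π _
    simp [← mul_assoc]

lemma pair_fiber_card (n : ℕ) (hn : 2 ≤ n) {i j k l : Fin n} (hij : i ≠ j) (hkl : k ≠ l) :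
    (univ.filter fun π : Equiv.Perm (Fin n) => π i = k ∧ π j = l).card = (n-2).factorial := by
  classical
  have h : (univ.filter fun π : Equiv.Perm (Fin n) => π i = k).card =
      ∑ l' : Fin n, ((univ.filter fun π : Equiv.Perm (Fin n) => π i = k).filter
        (fun π => π j = l')).card :=
    Finset.card_eq_sum_card_fiberwise (fun π _ => mem_univ _)
  simp only [Finset.filter_filter] at h
  rw [fiber_card n (by omega) i k] at h
  -- split off the l' = k term, which is empty
  rw [← Finset.sum_erase_add _ _ (mem_univ k)] at h
  have hk0 : (univ.filter fun π : Equiv.Perm (Fin n) => π i = k ∧ π j = k).card = 0 := by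
    rw [Finset.card_eq_zero, Finset.filter_eq_empty_iff]
    rintro π -
    rintro ⟨h1, h2⟩
    exact hij (π.injective (h1.trans h2.symm))
  rw [hk0, add_zero] at h
  have hall : ∀ l' ∈ univ.erase k,
      (univ.filter fun π : Equiv.Perm (Fin n) => π i = k ∧ π j = l').card =
      (univ.filter fun π : Equiv.Perm (Fin n) => π i = k ∧ π j = l).card := by
    intro l' hl'
    exact pair_fiber_card_eq n i j k l' l (Finset.mem_erase.mp hl').1 hkl.symm
  rw [Finset.sum_congr rfl hall, Finset.sum_const, Finset.card_erase_of_mem (mem_univ k),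
    Finset.card_univ, Fintype.card_fin, smul_eq_mul] at h
  have h2 : (n-1) * (n-2).factorial = (n-1).factorial := by
    have := Nat.mul_factorial_pred (n := n - 1) (by omega)
    simpa [Nat.sub_sub] using this
  exact (Nat.eq_of_mul_eq_mul_left (show 0 < n - 1 by omega) (h2.trans h)).symm

lemma sum_perm_single (n : ℕ) (hn : 1 ≤ n) (i : Fin n) (f : Fin n → ℝ)
    (hcard : ∀ k, (univ.filter fun π : Equiv.Perm (Fin n) => π i = k).card = (n-1).factorial) :
    ∑ π : Equiv.Perm (Fin n), f (π i) = ((n-1).factorial : ℝ) * ∑ k, f k := by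
  have h := Finset.sum_fiberwise_eq_sum_filter univ univ (fun π : Equiv.Perm (Fin n) => π i)
    (fun π => f (π i))
  simp only [mem_univ, Finset.filter_true] at h
  rw [← h]
  rw [Finset.mul_sum]
  refine Finset.sum_congr rfl fun k _ => ?_
  rw [Finset.sum_congr rfl (fun π hπ => by rw [(Finset.mem_filter.mp hπ).2]),
    Finset.sum_const, hcard, nsmul_eq_mul]

lemma sum_perm_pair (n : ℕ) (i j : Fin n) (hij : i ≠ j) (f g : Fin n → ℝ)
    (hcard : ∀ k l : Fin n,
      (univ.filter fun π : Equiv.Perm (Fin n) => π i = k ∧ π j = l).card =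
        if k ≠ l then (n-2).factorial else 0) :
    ∑ π : Equiv.Perm (Fin n), f (π i) * g (π j) =
      ((n-2).factorial : ℝ) * ∑ k, ∑ l, (if k ≠ l then f k * g l else 0) := by
  have h := Finset.sum_fiberwise_eq_sum_filter univ (univ ×ˢ univ)
    (fun π : Equiv.Perm (Fin n) => (π i, π j)) (fun π => f (π i) * g (π j))
  simp only [Finset.mem_product, mem_univ, and_self, Finset.filter_true] at h
  rw [← h, Finset.sum_product, Finset.mul_sum]
  refine Finset.sum_congr rfl fun k _ => ?_
  rw [Finset.mul_sum]
  refine Finset.sum_congr rfl fun l _ => ?_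
  have : ∀ π ∈ univ.filter (fun π : Equiv.Perm (Fin n) => (π i, π j) = (k, l)),
      f (π i) * g (π j) = f k * g l := by
    intro π hπ
    have := (Finset.mem_filter.mp hπ).2
    rw [Prod.mk.injEq] at this
    rw [this.1, this.2]
  rw [Finset.sum_congr rfl this, Finset.sum_const]
  have hfilt : (univ.filter fun π : Equiv.Perm (Fin n) => (π i, π j) = (k, l)) =
      (univ.filter fun π : Equiv.Perm (Fin n) => π i = k ∧ π j = l) := by
    simp [Prod.mk.injEq]
  rw [hfilt, hcard, nsmul_eq_mul]
  by_cases hkl : k ≠ l <;> simp [hkl]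

lemma sq_diff_sum (n : ℕ) (c : Fin n → ℝ) :
    ∑ k : Fin n, ∑ l : Fin n, (c k - c l)^2 =
      2*(n:ℝ)*(∑ k, (c k)^2) - 2*(∑ k, c k)^2 := by
  have e : (∑ k, c k) * (∑ l, c l) = ∑ k, ∑ l, c k * c l := Finset.sum_mul_sum _ _ _ _
  have h : ∀ k : Fin n, ∑ l : Fin n, (c k - c l)^2 =
      (n:ℝ) * (c k)^2 + (∑ l, (c l)^2) - 2 * ∑ l, c k * c l := by
    intro k
    have expand : ∀ l : Fin n, (c k - c l)^2 = (c k)^2 + (c l)^2 - 2 * (c k * c l) := by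
      intro l; ring
    rw [Finset.sum_congr rfl fun l _ => expand l, Finset.sum_sub_distrib,
      Finset.sum_add_distrib, Finset.sum_const, Finset.card_univ, Fintype.card_fin,
      nsmul_eq_mul, ← Finset.mul_sum]
  rw [Finset.sum_congr rfl fun k _ => h k, Finset.sum_sub_distrib, Finset.sum_add_distrib,
    Finset.sum_const, Finset.card_univ, Fintype.card_fin, nsmul_eq_mul, ← Finset.mul_sum,
    ← Finset.mul_sum, ← e]
  ring

lemma offdiag_sum (n : ℕ) (f g : Fin n → ℝ) :
    ∑ k : Fin n, ∑ l : Fin n, (if k ≠ l then f k * g l else 0) =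
      (∑ k, f k) * (∑ l, g l) - ∑ k, f k * g k := by
  have h : ∀ k : Fin n, ∑ l : Fin n, (if k ≠ l then f k * g l else 0) =
      f k * (∑ l, g l) - f k * g k := by
    intro k
    have : ∀ l : Fin n, (if k ≠ l then f k * g l else 0) =
        f k * g l - (if l = k then f k * g l else 0) := by
      intro l
      by_cases h : k = l <;> simp [h, eq_comm]
    rw [Finset.sum_congr rfl fun l _ => this l, Finset.sum_sub_distrib,
      Finset.sum_ite_eq' univ k (fun l => f k * g l), if_pos (mem_univ k), ← Finset.mul_sum]
  rw [Finset.sum_congr rfl fun k _ => h k, Finset.sum_sub_distrib, ← Finset.sum_mul]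

end aux

theorem variance_combinatorial_sum
    (n : ℕ) (hn : 2 ≤ n) (a : Fin n → Fin n → ℝ) :
    (∑ π : Equiv.Perm (Fin n),
        ((∑ i, a i (π i)) -
          (∑ π' : Equiv.Perm (Fin n), ∑ i, a i (π' i)) / (n.factorial : ℝ)) ^ 2) /
      (n.factorial : ℝ) =
    (1 / (4 * (n : ℝ) ^ 2 * ((n : ℝ) - 1))) *
      ∑ i, ∑ j, ∑ k, ∑ l,
        (if i ≠ j ∧ k ≠ l then (a i k - a j k - a i l + a j l) ^ 2 else 0) := by
  classical
  have hcard1 : ∀ i k : Fin n,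
      (univ.filter fun π : Equiv.Perm (Fin n) => π i = k).card = (n-1).factorial :=
    fun i k => fiber_card n (by omega) i k
  have hcard2 : ∀ (i j : Fin n), i ≠ j → ∀ k l : Fin n,
      (univ.filter fun π : Equiv.Perm (Fin n) => π i = k ∧ π j = l).card =
      if k ≠ l then (n-2).factorial else 0 := by
    intro i j hij k l
    by_cases hkl : k ≠ l
    · rw [if_pos hkl, pair_fiber_card n hn hij hkl]
    · rw [if_neg hkl]
      push_neg at hkl
      subst hkl
      rw [Finset.card_eq_zero, Finset.filter_eq_empty_iff]
      rintro π - ⟨h1, h2⟩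
      exact hij (π.injective (h1.trans h2.symm))
  -- abbreviations (as plain real numbers)
  have hT1 : (∑ π : Equiv.Perm (Fin n), ∑ i, a i (π i))
      = ((n-1).factorial : ℝ) * (∑ i, ∑ k, a i k) := by
    rw [Finset.sum_comm,
      Finset.sum_congr rfl fun i _ => sum_perm_single n (by omega) i (a i) (hcard1 i),
      ← Finset.mul_sum]
  have hW : (∑ i : Fin n, ∑ j ∈ univ.erase i,
        ((∑ k, a i k) * (∑ l, a j l) - ∑ k, a i k * a j k))
      = (∑ i, ∑ k, a i k)^2 - (∑ i, (∑ k, a i k)^2) - (∑ k, (∑ i, a i k)^2)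
        + (∑ i, ∑ k, (a i k)^2) := by
    have h1 : ∀ i : Fin n, ∑ j ∈ univ.erase i,
        ((∑ k, a i k) * (∑ l, a j l) - ∑ k, a i k * a j k)
        = (∑ j, ((∑ k, a i k) * (∑ l, a j l) - ∑ k, a i k * a j k))
          - ((∑ k, a i k) * (∑ l, a i l) - ∑ k, a i k * a i k) := fun i =>
      Finset.sum_erase_eq_sub (mem_univ i)
    rw [Finset.sum_congr rfl fun i _ => h1 i, Finset.sum_sub_distrib,
      Finset.sum_congr rfl fun i (_ : i ∈ univ) => Finset.sum_sub_distrib _ _,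
      Finset.sum_sub_distrib, Finset.sum_sub_distrib]
    have e1 : (∑ i : Fin n, ∑ j : Fin n, (∑ k, a i k) * (∑ l, a j l))
        = (∑ i, ∑ k, a i k)^2 := by
      rw [sq, Finset.sum_mul_sum]
    have e2 : (∑ i : Fin n, ∑ j : Fin n, ∑ k, a i k * a j k)
        = ∑ k, (∑ i, a i k)^2 := by
      calc ∑ i : Fin n, ∑ j : Fin n, ∑ k, a i k * a j k
          = ∑ i : Fin n, ∑ k, ∑ j : Fin n, a i k * a j k :=
            Finset.sum_congr rfl fun i _ => Finset.sum_comm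
        _ = ∑ k, ∑ i : Fin n, ∑ j : Fin n, a i k * a j k := Finset.sum_comm
        _ = ∑ k, (∑ i, a i k)^2 := by
            refine Finset.sum_congr rfl fun k _ => ?_
            rw [sq, Finset.sum_mul_sum]
    have e3 : (∑ i : Fin n, (∑ k, a i k) * (∑ l, a i l)) = ∑ i, (∑ k, a i k)^2 := by
      refine Finset.sum_congr rfl fun i _ => ?_; rw [sq]
    have e4 : (∑ i : Fin n, ∑ k, a i k * a i k) = ∑ i, ∑ k, (a i k)^2 := by
      refine Finset.sum_congr rfl fun i _ => Finset.sum_congr rfl fun k _ => ?_; rw [sq]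
    rw [e1, e2, e3, e4]
    ring
  have hT2 : (∑ π : Equiv.Perm (Fin n), (∑ i, a i (π i))^2)
      = ((n-1).factorial : ℝ) * (∑ i, ∑ k, (a i k)^2)
        + ((n-2).factorial : ℝ) *
          ((∑ i, ∑ k, a i k)^2 - (∑ i, (∑ k, a i k)^2) - (∑ k, (∑ i, a i k)^2)
            + (∑ i, ∑ k, (a i k)^2)) := by
    calc ∑ π : Equiv.Perm (Fin n), (∑ i, a i (π i))^2
        = ∑ π : Equiv.Perm (Fin n), ∑ i, ∑ j, a i (π i) * a j (π j) :=
          Finset.sum_congr rfl fun π _ => by rw [sq, Finset.sum_mul_sum]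
      _ = ∑ i, ∑ π : Equiv.Perm (Fin n), ∑ j, a i (π i) * a j (π j) := Finset.sum_comm
      _ = ∑ i, ∑ j, ∑ π : Equiv.Perm (Fin n), a i (π i) * a j (π j) :=
          Finset.sum_congr rfl fun i _ => Finset.sum_comm
      _ = ∑ i, ((∑ π : Equiv.Perm (Fin n), a i (π i) * a i (π i))
            + ∑ j ∈ univ.erase i, ∑ π : Equiv.Perm (Fin n), a i (π i) * a j (π j)) :=
          Finset.sum_congr rfl fun i _ => (Finset.add_sum_erase _ _ (mem_univ i)).symm
      _ = ∑ i, (((n-1).factorial : ℝ) * (∑ k, (a i k)^2)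
            + ∑ j ∈ univ.erase i, ((n-2).factorial : ℝ) *
              ((∑ k, a i k) * (∑ l, a j l) - ∑ k, a i k * a j k)) := by
          refine Finset.sum_congr rfl fun i _ => ?_
          congr 1
          · rw [sum_perm_single n (by omega) i (fun k => a i k * a i k) (hcard1 i)]
            congr 1
            exact Finset.sum_congr rfl fun k _ => (sq (a i k)).symm ▸ rfl
          · refine Finset.sum_congr rfl fun j hj => ?_
            have hij : i ≠ j := fun h => (Finset.mem_erase.mp hj).1 h.symm
            rw [sum_perm_pair n i j hij (a i) (a j) (hcard2 i j hij), offdiag_sum]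
      _ = ((n-1).factorial : ℝ) * (∑ i, ∑ k, (a i k)^2)
            + ((n-2).factorial : ℝ) * ∑ i, ∑ j ∈ univ.erase i,
              ((∑ k, a i k) * (∑ l, a j l) - ∑ k, a i k * a j k) := by
          rw [Finset.sum_add_distrib, ← Finset.mul_sum]
          congr 1
          rw [Finset.mul_sum]
          refine Finset.sum_congr rfl fun i _ => ?_
          rw [Finset.mul_sum]
      _ = _ := by rw [hW]
  have hZ : (∑ i, ∑ j, ∑ k, ∑ l,
        (if i ≠ j ∧ k ≠ l then (a i k - a j k - a i l + a j l) ^ 2 else 0))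
      = 4*(n:ℝ)^2*(∑ i, ∑ k, (a i k)^2) - 4*(n:ℝ)*(∑ i, (∑ k, a i k)^2)
        - 4*(n:ℝ)*(∑ k, (∑ i, a i k)^2) + 4*(∑ i, ∑ k, a i k)^2 := by
    have drop : ∀ i j k l : Fin n,
        (if i ≠ j ∧ k ≠ l then (a i k - a j k - a i l + a j l) ^ 2 else 0)
        = (a i k - a j k - a i l + a j l) ^ 2 := by
      intro i j k l
      by_cases hi : i = j
      · subst hi; rw [if_neg (by simp)]; ring
      by_cases hk : k = l
      · subst hk; rw [if_neg (by tauto)]; ring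
      · rw [if_pos ⟨hi, hk⟩]
    rw [Finset.sum_congr rfl fun i _ => Finset.sum_congr rfl fun j _ =>
      Finset.sum_congr rfl fun k _ => Finset.sum_congr rfl fun l _ => drop i j k l]
    have step1 : ∀ i j : Fin n, (∑ k, ∑ l, (a i k - a j k - a i l + a j l)^2)
        = 2*(n:ℝ)*(∑ k, (a i k - a j k)^2) - 2*((∑ k, a i k) - (∑ k, a j k))^2 := by
      intro i j
      calc ∑ k, ∑ l, (a i k - a j k - a i l + a j l)^2
          = ∑ k, ∑ l, ((a i k - a j k) - (a i l - a j l))^2 :=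
            Finset.sum_congr rfl fun k _ => Finset.sum_congr rfl fun l _ => by ring
        _ = 2*(n:ℝ)*(∑ k, (a i k - a j k)^2) - 2*(∑ k, (a i k - a j k))^2 :=
            sq_diff_sum n (fun k => a i k - a j k)
        _ = _ := by rw [Finset.sum_sub_distrib]
    rw [Finset.sum_congr rfl fun i _ => Finset.sum_congr rfl fun j _ => step1 i j]
    have e5 : (∑ i : Fin n, ∑ j : Fin n, 2*(n:ℝ)*(∑ k, (a i k - a j k)^2))
        = 2*(n:ℝ)*(2*(n:ℝ)*(∑ i, ∑ k, (a i k)^2) - 2*(∑ k, (∑ i, a i k)^2)) := by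
      calc ∑ i : Fin n, ∑ j : Fin n, 2*(n:ℝ)*(∑ k, (a i k - a j k)^2)
          = 2*(n:ℝ)*(∑ i : Fin n, ∑ j : Fin n, ∑ k, (a i k - a j k)^2) := by
            rw [Finset.mul_sum]
            refine Finset.sum_congr rfl fun i _ => ?_
            rw [Finset.mul_sum]
        _ = 2*(n:ℝ)*(∑ k, ∑ i : Fin n, ∑ j : Fin n, (a i k - a j k)^2) := by
            congr 1
            calc ∑ i : Fin n, ∑ j : Fin n, ∑ k, (a i k - a j k)^2
                = ∑ i : Fin n, ∑ k, ∑ j : Fin n, (a i k - a j k)^2 :=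
                  Finset.sum_congr rfl fun i _ => Finset.sum_comm
              _ = ∑ k, ∑ i : Fin n, ∑ j : Fin n, (a i k - a j k)^2 := Finset.sum_comm
        _ = 2*(n:ℝ)*(∑ k, (2*(n:ℝ)*(∑ i, (a i k)^2) - 2*(∑ i, a i k)^2)) := by
            congr 1
            exact Finset.sum_congr rfl fun k _ => sq_diff_sum n (fun i => a i k)
        _ = _ := by
            have comm : (∑ k : Fin n, ∑ i : Fin n, (a i k)^2) = ∑ i, ∑ k, (a i k)^2 :=
              Finset.sum_comm
            rw [Finset.sum_sub_distrib, ← Finset.mul_sum, ← Finset.mul_sum, comm]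
    have e6 : (∑ i : Fin n, ∑ j : Fin n, 2*((∑ k, a i k) - (∑ k, a j k))^2)
        = 2*(2*(n:ℝ)*(∑ i, (∑ k, a i k)^2) - 2*(∑ i, ∑ k, a i k)^2) := by
      calc ∑ i : Fin n, ∑ j : Fin n, 2*((∑ k, a i k) - (∑ k, a j k))^2
          = 2*(∑ i : Fin n, ∑ j : Fin n, ((∑ k, a i k) - (∑ k, a j k))^2) := by
            rw [Finset.mul_sum]
            refine Finset.sum_congr rfl fun i _ => ?_
            rw [Finset.mul_sum]
        _ = _ := congrArg (2 * ·) (sq_diff_sum n (fun i => ∑ k, a i k))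
    rw [Finset.sum_congr rfl fun i (_ : i ∈ univ) => Finset.sum_sub_distrib _ _,
      Finset.sum_sub_distrib, e5, e6]
    ring
  -- final assembly
  have hF : (0:ℝ) < ((n-2).factorial : ℝ) := by exact_mod_cast Nat.factorial_pos _
  have hx0 : ((n:ℝ)) ≠ 0 := by positivity
  have hx2 : (2:ℝ) ≤ (n:ℝ) := by exact_mod_cast hn
  have hx1 : ((n:ℝ)) - 1 ≠ 0 := by nlinarith
  have hn1 : ((n-1).factorial : ℝ) = ((n:ℝ) - 1) * ((n-2).factorial : ℝ) := by
    have h2 : (n-1) * (n-2).factorial = (n-1).factorial := by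
      have h3 := Nat.mul_factorial_pred (n := n-1) (by omega)
      rwa [Nat.sub_sub] at h3
    rw [← h2]
    push_cast [Nat.cast_sub (show 1 ≤ n by omega)]
    ring
  have hnfac : ((n.factorial : ℕ) : ℝ) = (n:ℝ) * (((n:ℝ) - 1) * ((n-2).factorial : ℝ)) := by
    rw [← hn1, ← Nat.mul_factorial_pred (show n ≠ 0 by omega)]
    push_cast
    ring
  set N : ℝ := (n.factorial : ℝ) with hN
  set T : ℝ := ∑ π' : Equiv.Perm (Fin n), ∑ i, a i (π' i) with hT
  have hNpos : 0 < N := by rw [hN]; exact_mod_cast Nat.factorial_pos n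
  have eexp : (∑ π : Equiv.Perm (Fin n), ((∑ i, a i (π i)) - T / N) ^ 2)
      = (∑ π : Equiv.Perm (Fin n), (∑ i, a i (π i))^2) - 2*(T/N)*T + N*(T/N)^2 := by
    have hper : ∀ π : Equiv.Perm (Fin n), ((∑ i, a i (π i)) - T / N) ^ 2
        = (∑ i, a i (π i))^2 - 2*(T/N)*(∑ i, a i (π i)) + (T/N)^2 := fun π => by ring
    rw [Finset.sum_congr rfl fun π _ => hper π, Finset.sum_add_distrib, Finset.sum_sub_distrib,
      ← Finset.mul_sum, ← hT, Finset.sum_const, Finset.card_univ, Fintype.card_perm,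
      Fintype.card_fin, nsmul_eq_mul, ← hN]
  have hT' : T = ((n-1).factorial : ℝ) * (∑ i, ∑ k, a i k) := hT.trans hT1
  rw [eexp, hT2, hZ, hT', hn1, hN, (hN.symm.trans hnfac)]
  have hF0 : ((n-2).factorial : ℝ) ≠ 0 := ne_of_gt hF
  field_simp
  ring
end
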